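/- Let A = {A_1, …, A_m} be a finite irreducible family of d×d real matrices (no common nontrivial invariant subspace) with joint spectral radius 1. Then there exists a norm ‖·‖ on ℝ^d with max_{i} ‖A_i x‖ = ‖x‖ for all x ∈ ℝ^d. -/

import Mathlib

/-!
The vectors whose orbits under all products from `𝒜` stay bounded form an invariant subspace.
It cannot be `{0}`: otherwise compactness of the unit sphere yields `K` such that every vector
is at least doubled in norm by some product of length at most `K`, and iterating forces the
joint spectral radius to be at least `2 ^ (1 / K) > 1`. So every orbit is bounded
and `N x = limsup_k max_{P ∈ 𝒜 ^ k} ‖P x‖` is a seminorm; shifting `k` by one gives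
`N x = max_{A ∈ 𝒜} N (A x)`. The kernel of `N` is again invariant, and it is not everything
because for every `k` some product of length `k` has norm at least `1`, by submultiplicativity
and the joint spectral radius being `1`.
-/

open Filter

/-- The operator norm of a real `d × d` matrix induced by the sup-norm on `ℝ^d`. -/
noncomputable def mnorm {d : ℕ} (P : Matrix (Fin d) (Fin d) ℝ) : ℝ :=
  ‖LinearMap.toContinuousLinearMap (Matrix.toLin' P)‖

/-- The set of all products of `k` matrices taken from the family `𝒜`. -/
def prodsOf {d : ℕ} (𝒜 : Set (Matrix (Fin d) (Fin d) ℝ)) (k : ℕ) :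
    Set (Matrix (Fin d) (Fin d) ℝ) :=
  {P | ∃ l : List (Matrix (Fin d) (Fin d) ℝ), (∀ a ∈ l, a ∈ 𝒜) ∧ l.length = k ∧ l.prod = P}

open scoped Topology Pointwise Matrix

namespace Seminorm

variable {E : Type*} [AddCommGroup E] [Module ℝ E]

def ker (p : Seminorm ℝ E) : Submodule ℝ E where
  carrier := {x | p x = 0}
  add_mem' {x y} hx hy :=
    le_antisymm ((map_add_le_add p x y).trans_eq (by simp_all)) (apply_nonneg p _)
  zero_mem' := map_zero p
  smul_mem' c x hx := by simp_all [map_smul_eq_mul]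

@[simp]
lemma mem_ker {p : Seminorm ℝ E} {x : E} : x ∈ p.ker ↔ p x = 0 := Iff.rfl

def boundedSubmodule {ι : Type*} (p : ι → Seminorm ℝ E) : Submodule ℝ E where
  carrier := {x | BddAbove (Set.range fun i => p i x)}
  add_mem' {x y} := by
    rintro ⟨a, ha⟩ ⟨b, hb⟩
    refine ⟨a + b, Set.forall_mem_range.2 fun i => (map_add_le_add (p i) x y).trans ?_⟩
    exact add_le_add (ha ⟨i, rfl⟩) (hb ⟨i, rfl⟩)
  zero_mem' := ⟨0, Set.forall_mem_range.2 fun i => (map_zero (p i)).le⟩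
  smul_mem' c x := by
    rintro ⟨a, ha⟩
    refine ⟨‖c‖ * a, Set.forall_mem_range.2 fun i => ?_⟩
    rw [map_smul_eq_mul]
    exact mul_le_mul_of_nonneg_left (ha ⟨i, rfl⟩) (norm_nonneg c)

@[simp]
lemma mem_boundedSubmodule {ι : Type*} {p : ι → Seminorm ℝ E} {x : E} :
    x ∈ boundedSubmodule p ↔ BddAbove (Set.range fun i => p i x) := Iff.rfl

section limsup

variable (p : ℕ → Seminorm ℝ E)

lemma isBoundedUnder_ge_apply (x : E) : IsBoundedUnder (· ≥ ·) atTop fun k => p k x :=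
  isBoundedUnder_of ⟨0, fun k => apply_nonneg (p k) x⟩

lemma isCoboundedUnder_le_apply (x : E) : IsCoboundedUnder (· ≤ ·) atTop fun k => p k x :=
  (isBoundedUnder_ge_apply p x).isCoboundedUnder_le

lemma isBoundedUnder_le_apply (hp : boundedSubmodule p = ⊤) (x : E) :
    IsBoundedUnder (· ≤ ·) atTop fun k => p k x :=
  (mem_boundedSubmodule.1 (hp ▸ Submodule.mem_top : x ∈ boundedSubmodule p)).isBoundedUnder_of_range

noncomputable def limsup (hp : boundedSubmodule p = ⊤) : Seminorm ℝ E :=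
  Seminorm.of (fun x => Filter.limsup (fun k => p k x) atTop)
    (fun x y => calc
      Filter.limsup (fun k => p k (x + y)) atTop ≤ Filter.limsup (fun k => p k x + p k y) atTop :=
        limsup_le_limsup (Eventually.of_forall fun k => map_add_le_add (p k) x y)
          (isCoboundedUnder_le_apply p _)
          (isBoundedUnder_le_add (isBoundedUnder_le_apply p hp x) (isBoundedUnder_le_apply p hp y))
      _ ≤ _ := limsup_add_le (isBoundedUnder_ge_apply p x) (isBoundedUnder_le_apply p hp x)
          (isCoboundedUnder_le_apply p y) (isBoundedUnder_le_apply p hp y))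
    (fun c x => by
      simp_rw [map_smul_eq_mul]
      exact ((monotone_mul_left_of_nonneg (norm_nonneg c)).map_limsup_of_continuousAt _
        (continuous_const_mul _).continuousAt (isBoundedUnder_le_apply p hp x)
        (isCoboundedUnder_le_apply p x)).symm)

variable {p}

lemma limsup_apply (hp : boundedSubmodule p = ⊤) (x : E) :
    limsup p hp x = Filter.limsup (fun k => p k x) atTop := rfl

lemma tendsto_zero_of_limsup_apply_eq_zero (hp : boundedSubmodule p = ⊤) {x : E}
    (hx : limsup p hp x = 0) : Tendsto (fun k => p k x) atTop (𝓝 0) :=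
  tendsto_order.2 ⟨fun _ ha => Eventually.of_forall fun _ => ha.trans_le (apply_nonneg _ _),
    fun _ ha => eventually_lt_of_limsup_lt (hx.trans_lt ha) (isBoundedUnder_le_apply p hp x)⟩

end limsup

lemma apply_le_sum_single_mul_norm {ι : Type*} [Fintype ι] [DecidableEq ι]
    (p : Seminorm ℝ (ι → ℝ)) (x : ι → ℝ) : p x ≤ (∑ i, p (Pi.single i 1)) * ‖x‖ := by
  calc p x = p (∑ i, x i • Pi.single i 1) := by
        congr 1; ext j; simp [Pi.single_apply]
    _ ≤ ∑ i, ‖x i‖ * p (Pi.single i 1) := by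
        refine (Finset.le_sum_of_subadditive p (map_zero p).le (map_add_le_add p) _ _).trans_eq ?_
        simp_rw [map_smul_eq_mul]
    _ ≤ ∑ i, ‖x‖ * p (Pi.single i 1) :=
        Finset.sum_le_sum fun i _ =>
          mul_le_mul_of_nonneg_right (norm_le_pi_norm x i) (apply_nonneg _ _)
    _ = (∑ i, p (Pi.single i 1)) * ‖x‖ := by rw [Finset.sum_mul]; simp_rw [mul_comm]

end Seminorm

lemma exists_finset_forall_exists_lt_norm_apply {E ι : Type*} [NormedAddCommGroup E]
    [NormedSpace ℝ E] [FiniteDimensional ℝ E] (T : ι → E →ₗ[ℝ] E) {c : ℝ}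
    (h : ∀ x ≠ 0, ∃ i, c * ‖x‖ < ‖T i x‖) :
    ∃ s : Finset ι, ∀ x ≠ 0, ∃ i ∈ s, c * ‖x‖ < ‖T i x‖ := by
  have hopen (i : ι) : IsOpen {x | c * ‖x‖ < ‖T i x‖} :=
    isOpen_lt (continuous_const.mul continuous_norm) (T i).continuous_of_finiteDimensional.norm
  have hcover : Metric.sphere (0 : E) 1 ⊆ ⋃ i, {x | c * ‖x‖ < ‖T i x‖} := fun x hx =>
    Set.mem_iUnion.2 (h x (ne_zero_of_mem_unit_sphere ⟨x, hx⟩))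
  obtain ⟨s, hs⟩ := (isCompact_sphere (0 : E) 1).elim_finite_subcover _ hopen hcover
  refine ⟨s, fun x hx => ?_⟩
  have hx' : 0 < ‖x‖ := norm_pos_iff.2 hx
  have hu : ‖x‖⁻¹ • x ∈ Metric.sphere (0 : E) 1 := by simp [norm_smul, hx'.ne']
  obtain ⟨i, hi, hlt⟩ := Set.mem_iUnion₂.1 (hs hu)
  refine ⟨i, hi, ?_⟩
  simp only [Set.mem_ofPred_eq, map_smul, norm_smul, norm_inv, norm_norm] at hlt
  rw [mul_left_comm] at hlt
  exact lt_of_mul_lt_mul_left hlt (inv_nonneg.2 hx'.le)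

variable {d : ℕ}

lemma mnorm_nonneg (P : Matrix (Fin d) (Fin d) ℝ) : 0 ≤ mnorm P := norm_nonneg _

lemma norm_mulVec_le_mnorm_mul (P : Matrix (Fin d) (Fin d) ℝ) (x : Fin d → ℝ) :
    ‖P *ᵥ x‖ ≤ mnorm P * ‖x‖ :=
  (LinearMap.toContinuousLinearMap (Matrix.toLin' P)).le_opNorm x

lemma mnorm_le_of_forall {P : Matrix (Fin d) (Fin d) ℝ} {c : ℝ} (hc : 0 ≤ c)
    (h : ∀ x, ‖P *ᵥ x‖ ≤ c * ‖x‖) : mnorm P ≤ c :=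
  ContinuousLinearMap.opNorm_le_bound _ hc h

lemma mnorm_mul_le (P Q : Matrix (Fin d) (Fin d) ℝ) : mnorm (P * Q) ≤ mnorm P * mnorm Q :=
  mnorm_le_of_forall (mul_nonneg (mnorm_nonneg P) (mnorm_nonneg Q)) fun x => by
    rw [← Matrix.mulVec_mulVec, mul_assoc]
    exact (norm_mulVec_le_mnorm_mul P _).trans
      (mul_le_mul_of_nonneg_left (norm_mulVec_le_mnorm_mul Q x) (mnorm_nonneg P))

lemma mnorm_le_pow_of_mem_pow {𝒮 : Finset (Matrix (Fin d) (Fin d) ℝ)} {r : ℝ} (hr : 0 ≤ r)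
    (h : ∀ A ∈ 𝒮, mnorm A ≤ r) : ∀ {n : ℕ} {P}, P ∈ 𝒮 ^ n → mnorm P ≤ r ^ n
  | 0, P, hP => by
    rw [pow_zero, Finset.mem_one] at hP
    subst hP
    exact mnorm_le_of_forall zero_le_one fun x => by simp
  | n + 1, P, hP => by
    rw [pow_succ, Finset.mem_mul] at hP
    obtain ⟨Q, hQ, A, hA, rfl⟩ := hP
    rw [pow_succ]
    exact (mnorm_mul_le Q A).trans
      (mul_le_mul (mnorm_le_pow_of_mem_pow hr h hQ) (h A hA) (mnorm_nonneg A) (pow_nonneg hr n))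

lemma prodsOf_eq_pow (𝒜 : Set (Matrix (Fin d) (Fin d) ℝ)) (k : ℕ) : prodsOf 𝒜 k = 𝒜 ^ k := by
  ext P
  rw [Set.mem_pow]
  constructor
  · rintro ⟨l, hl, rfl, rfl⟩
    exact ⟨fun i => ⟨l.get i, hl _ (List.get_mem l i)⟩, by simp⟩
  · rintro ⟨f, rfl⟩
    exact ⟨_, by simp, List.length_ofFn, rfl⟩

noncomputable def powSeminorm (𝒜 : Finset (Matrix (Fin d) (Fin d) ℝ)) (k : ℕ) :
    Seminorm ℝ (Fin d → ℝ) :=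
  (𝒜 ^ k).sup fun P => (normSeminorm ℝ (Fin d → ℝ)).comp (Matrix.toLin' P)

noncomputable def jsrSeq (𝒜 : Finset (Matrix (Fin d) (Fin d) ℝ)) (k : ℕ) : ℝ :=
  sSup ((fun P => mnorm P ^ ((1 : ℝ) / k)) '' ((𝒜 ^ k : Finset _) : Set (Matrix (Fin d) (Fin d) ℝ)))

def IsIrreducibleFamily (𝒜 : Finset (Matrix (Fin d) (Fin d) ℝ)) : Prop :=
  ∀ S : Submodule ℝ (Fin d → ℝ), (∀ A ∈ 𝒜, ∀ x ∈ S, A *ᵥ x ∈ S) → S = ⊥ ∨ S = ⊤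

section powSeminorm

variable {𝒜 : Finset (Matrix (Fin d) (Fin d) ℝ)}

lemma norm_mulVec_le_powSeminorm {k : ℕ} {P : Matrix (Fin d) (Fin d) ℝ} (hP : P ∈ 𝒜 ^ k)
    (x : Fin d → ℝ) : ‖P *ᵥ x‖ ≤ powSeminorm 𝒜 k x :=
  Seminorm.le_finset_sup_apply (p := fun P => (normSeminorm ℝ _).comp (Matrix.toLin' P)) hP

lemma powSeminorm_apply_le {k : ℕ} {x : Fin d → ℝ} {a : ℝ} (ha : 0 ≤ a)
    (h : ∀ P ∈ 𝒜 ^ k, ‖P *ᵥ x‖ ≤ a) :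
    powSeminorm 𝒜 k x ≤ a :=
  Seminorm.finset_sup_apply_le ha h

lemma exists_lt_norm_mulVec_of_lt_powSeminorm {k : ℕ} {x : Fin d → ℝ} {a : ℝ} (ha : 0 ≤ a)
    (h : a < powSeminorm 𝒜 k x) : ∃ P ∈ 𝒜 ^ k, a < ‖P *ᵥ x‖ := by
  by_contra! h'
  exact h.not_ge (powSeminorm_apply_le ha h')

lemma powSeminorm_mulVec_le_succ {A : Matrix (Fin d) (Fin d) ℝ} (hA : A ∈ 𝒜) (k : ℕ)
    (x : Fin d → ℝ) : powSeminorm 𝒜 k (A *ᵥ x) ≤ powSeminorm 𝒜 (k + 1) x :=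
  powSeminorm_apply_le (apply_nonneg _ _) fun P hP => by
    rw [Matrix.mulVec_mulVec]
    exact norm_mulVec_le_powSeminorm (pow_succ 𝒜 k ▸ Finset.mul_mem_mul hP hA) x

lemma powSeminorm_succ_apply (hne : 𝒜.Nonempty) (k : ℕ) (x : Fin d → ℝ) :
    powSeminorm 𝒜 (k + 1) x = 𝒜.sup' hne fun A => powSeminorm 𝒜 k (A *ᵥ x) := by
  refine le_antisymm (powSeminorm_apply_le ?_ fun P hP => ?_)
    (Finset.sup'_le _ _ fun A hA => powSeminorm_mulVec_le_succ hA k x)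
  · obtain ⟨A, hA⟩ := hne
    exact (apply_nonneg _ _).trans (Finset.le_sup' (fun A => powSeminorm 𝒜 k (A *ᵥ x)) hA)
  · rw [pow_succ, Finset.mem_mul] at hP
    obtain ⟨Q, hQ, A, hA, rfl⟩ := hP
    rw [← Matrix.mulVec_mulVec]
    exact (norm_mulVec_le_powSeminorm hQ _).trans
      (Finset.le_sup' (fun A => powSeminorm 𝒜 k (A *ᵥ x)) hA)

lemma mulVec_mem_boundedSubmodule_powSeminorm {A : Matrix (Fin d) (Fin d) ℝ} (hA : A ∈ 𝒜)
    {x : Fin d → ℝ} (hx : x ∈ Seminorm.boundedSubmodule (powSeminorm 𝒜)) :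
    A *ᵥ x ∈ Seminorm.boundedSubmodule (powSeminorm 𝒜) := by
  obtain ⟨C, hC⟩ := hx
  exact ⟨C, Set.forall_mem_range.2 fun k =>
    (powSeminorm_mulVec_le_succ hA k x).trans (hC ⟨k + 1, rfl⟩)⟩

end powSeminorm

section jsr

variable {𝒜 : Finset (Matrix (Fin d) (Fin d) ℝ)}

lemma eventually_forall_mnorm_lt_pow (hρ : Tendsto (jsrSeq 𝒜) atTop (𝓝 1)) {c : ℝ}
    (hc : 1 < c) : ∀ᶠ k in atTop, ∀ P ∈ 𝒜 ^ k, mnorm P < c ^ k := by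
  filter_upwards [hρ.eventually (gt_mem_nhds hc), eventually_ne_atTop 0] with k hk hk0 P hP
  have hle : mnorm P ^ ((1 : ℝ) / k) ≤ jsrSeq 𝒜 k :=
    le_csSup ((Finset.finite_toSet _).image _).bddAbove (Set.mem_image_of_mem _ hP)
  rw [← Real.rpow_natCast, ← Real.rpow_inv_lt_iff_of_pos (mnorm_nonneg P) (by linarith)
    (by positivity), ← one_div]
  exact hle.trans_lt hk

lemma exists_one_le_mnorm (hne : 𝒜.Nonempty) (hρ : Tendsto (jsrSeq 𝒜) atTop (𝓝 1)) {k : ℕ}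
    (hk : k ≠ 0) : ∃ P ∈ 𝒜 ^ k, 1 ≤ mnorm P := by
  by_contra! h
  set r := (𝒜 ^ k).sup' hne.pow mnorm
  have hr1 : r < 1 := (Finset.sup'_lt_iff _).2 h
  have hr0 : 0 ≤ r := by
    obtain ⟨P, hP⟩ := hne.pow (n := k)
    exact (mnorm_nonneg P).trans (Finset.le_sup' mnorm hP)
  have hbound : ∀ n ≠ 0, jsrSeq 𝒜 (k * n) ≤ r ^ ((1 : ℝ) / k) := by
    intro n hn
    refine csSup_le ((Finset.coe_nonempty.2 hne.pow).image _) ?_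
    rintro - ⟨P, hP, rfl⟩
    have hPn : mnorm P ≤ r ^ n :=
      mnorm_le_pow_of_mem_pow hr0 (fun A hA => Finset.le_sup' mnorm hA) (pow_mul 𝒜 k n ▸ hP)
    calc mnorm P ^ ((1 : ℝ) / ↑(k * n)) ≤ (r ^ n) ^ ((1 : ℝ) / ↑(k * n)) :=
          Real.rpow_le_rpow (mnorm_nonneg P) hPn (by positivity)
      _ = r ^ ((1 : ℝ) / k) := by
          rw [← Real.rpow_natCast, ← Real.rpow_mul hr0]
          congr 1
          push_cast
          field_simp
  have hmul : Tendsto (fun n => k * n) atTop atTop :=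
    tendsto_id.const_mul_atTop' (Nat.pos_of_ne_zero hk)
  have h1 : 1 ≤ r ^ ((1 : ℝ) / k) :=
    le_of_tendsto (hρ.comp hmul) ((eventually_ne_atTop 0).mono hbound)
  exact (Real.rpow_lt_one hr0 hr1 (by positivity)).not_ge h1

end jsr

section bounded

variable {𝒜 : Finset (Matrix (Fin d) (Fin d) ℝ)}

lemma exists_expansion_of_boundedSubmodule_eq_bot
    (h : Seminorm.boundedSubmodule (powSeminorm 𝒜) = ⊥) :
    ∃ K, 0 < K ∧ ∀ x ≠ 0, ∃ k, 0 < k ∧ k ≤ K ∧ ∃ P ∈ 𝒜 ^ k, 2 * ‖x‖ < ‖P *ᵥ x‖ := by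
  let T : (Σ k, ↥(𝒜 ^ k)) → (Fin d → ℝ) →ₗ[ℝ] (Fin d → ℝ) := fun i => Matrix.toLin' i.2
  have hT : ∀ x ≠ 0, ∃ i, 2 * ‖x‖ < ‖T i x‖ := by
    intro x hx
    have hunb : ¬BddAbove (Set.range fun k => powSeminorm 𝒜 k x) := by
      rwa [← Seminorm.mem_boundedSubmodule, h, Submodule.mem_bot]
    obtain ⟨-, ⟨k, rfl⟩, hk⟩ := not_bddAbove_iff.1 hunb (2 * ‖x‖)
    obtain ⟨P, hP, hlt⟩ := exists_lt_norm_mulVec_of_lt_powSeminorm (by positivity) hk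
    exact ⟨⟨k, P, hP⟩, hlt⟩
  obtain ⟨s, hs⟩ := exists_finset_forall_exists_lt_norm_apply T hT
  refine ⟨max 1 (s.sup Sigma.fst), by positivity, fun x hx => ?_⟩
  obtain ⟨⟨k, P, hP⟩, hi, hlt⟩ := hs x hx
  refine ⟨k, Nat.pos_of_ne_zero ?_, le_max_of_le_right (Finset.le_sup (f := Sigma.fst) hi),
    P, hP, hlt⟩
  rintro rfl
  rw [pow_zero, Finset.mem_one] at hP
  subst hP
  simp only [T, Matrix.toLin'_apply, Matrix.one_mulVec] at hlt
  linarith [norm_pos_iff.2 hx]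

lemma exists_pow_expansion {K : ℕ}
    (hK : ∀ x ≠ 0, ∃ k, 0 < k ∧ k ≤ K ∧ ∃ P ∈ 𝒜 ^ k, 2 * ‖x‖ < ‖P *ᵥ x‖)
    {x : Fin d → ℝ} (hx : x ≠ 0) :
    ∀ n : ℕ, ∃ L, n ≤ L ∧ L ≤ n * K ∧ ∃ P ∈ 𝒜 ^ L, 2 ^ n * ‖x‖ ≤ ‖P *ᵥ x‖
  | 0 => ⟨0, le_rfl, (zero_mul K).ge, 1, by simp, by simp⟩
  | n + 1 => by
    obtain ⟨L, hnL, hLK, P, hP, hPx⟩ := exists_pow_expansion hK hx n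
    have hPx0 : P *ᵥ x ≠ 0 :=
      norm_pos_iff.1 ((mul_pos (by positivity) (norm_pos_iff.2 hx)).trans_le hPx)
    obtain ⟨k, hk0, hkK, Q, hQ, hQP⟩ := hK _ hPx0
    refine ⟨k + L, by omega, by rw [Nat.succ_mul]; omega, Q * P,
      pow_add 𝒜 k L ▸ Finset.mul_mem_mul hQ hP, ?_⟩
    rw [← Matrix.mulVec_mulVec, pow_succ, mul_comm _ 2, mul_assoc]
    exact (mul_le_mul_of_nonneg_left hPx zero_le_two).trans hQP.le

lemma boundedSubmodule_powSeminorm_ne_bot (hρ : Tendsto (jsrSeq 𝒜) atTop (𝓝 1))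
    {x : Fin d → ℝ} (hx : x ≠ 0) : Seminorm.boundedSubmodule (powSeminorm 𝒜) ≠ ⊥ := by
  intro hbot
  obtain ⟨K, hK0, hK⟩ := exists_expansion_of_boundedSubmodule_eq_bot hbot
  set c : ℝ := 2 ^ ((K : ℝ)⁻¹)
  have hc : 1 < c := Real.one_lt_rpow one_lt_two (by positivity)
  have hcK : c ^ K = 2 := Real.rpow_inv_natCast_pow zero_le_two hK0.ne'
  obtain ⟨M, hM⟩ := eventually_atTop.1 (eventually_forall_mnorm_lt_pow hρ hc)
  obtain ⟨L, hML, hLK, P, hP, hPx⟩ := exists_pow_expansion hK hx M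
  have hx' : 0 < ‖x‖ := norm_pos_iff.2 hx
  have : 2 ^ M * ‖x‖ < 2 ^ M * ‖x‖ := calc
    2 ^ M * ‖x‖ ≤ mnorm P * ‖x‖ := hPx.trans (norm_mulVec_le_mnorm_mul P x)
    _ < c ^ L * ‖x‖ := mul_lt_mul_of_pos_right (hM L hML P hP) hx'
    _ ≤ c ^ (M * K) * ‖x‖ := by gcongr; exact hc.le
    _ = 2 ^ M * ‖x‖ := by rw [mul_comm M, pow_mul, hcK]
  exact this.false

lemma boundedSubmodule_powSeminorm_eq_top (hirr : IsIrreducibleFamily 𝒜)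
    (hρ : Tendsto (jsrSeq 𝒜) atTop (𝓝 1)) :
    Seminorm.boundedSubmodule (powSeminorm 𝒜) = ⊤ := by
  by_contra htop
  have hbot := (hirr _ fun A hA x => mulVec_mem_boundedSubmodule_powSeminorm hA).resolve_right htop
  obtain ⟨x, -, hx⟩ := (Submodule.ne_bot_iff ⊤).1 (Ne.symm (hbot ▸ htop))
  exact boundedSubmodule_powSeminorm_ne_bot hρ hx hbot

end bounded

noncomputable def barabanovSeminorm (𝒜 : Finset (Matrix (Fin d) (Fin d) ℝ))
    (hbdd : Seminorm.boundedSubmodule (powSeminorm 𝒜) = ⊤) : Seminorm ℝ (Fin d → ℝ) :=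
  Seminorm.limsup (powSeminorm 𝒜) hbdd

section barabanov

variable {𝒜 : Finset (Matrix (Fin d) (Fin d) ℝ)}
  (hbdd : Seminorm.boundedSubmodule (powSeminorm 𝒜) = ⊤)

lemma barabanovSeminorm_apply_eq_sup' (hne : 𝒜.Nonempty) (x : Fin d → ℝ) :
    barabanovSeminorm 𝒜 hbdd x =
      𝒜.sup' hne fun A => barabanovSeminorm 𝒜 hbdd (A *ᵥ x) := by
  simp only [barabanovSeminorm, Seminorm.limsup_apply]
  rw [← limsup_nat_add _ 1]
  simp_rw [powSeminorm_succ_apply hne]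
  exact limsup_finset_sup' hne (fun A _ => Seminorm.isCoboundedUnder_le_apply _ _)
    (fun A _ => Seminorm.isBoundedUnder_le_apply _ hbdd _)

lemma barabanovSeminorm_mulVec_le (hne : 𝒜.Nonempty) {A : Matrix (Fin d) (Fin d) ℝ}
    (hA : A ∈ 𝒜) (x : Fin d → ℝ) :
    barabanovSeminorm 𝒜 hbdd (A *ᵥ x) ≤ barabanovSeminorm 𝒜 hbdd x :=
  (barabanovSeminorm_apply_eq_sup' hbdd hne x).symm ▸
    Finset.le_sup' (fun A => barabanovSeminorm 𝒜 hbdd (A *ᵥ x)) hA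

lemma ker_barabanovSeminorm_eq_bot (hne : 𝒜.Nonempty) (hirr : IsIrreducibleFamily 𝒜)
    (hρ : Tendsto (jsrSeq 𝒜) atTop (𝓝 1)) : (barabanovSeminorm 𝒜 hbdd).ker = ⊥ := by
  refine (hirr _ fun A hA x hx => ?_).resolve_right fun htop => ?_
  · rw [Seminorm.mem_ker] at hx ⊢
    exact le_antisymm (hx ▸ barabanovSeminorm_mulVec_le hbdd hne hA x) (apply_nonneg _ _)
  · have hsum : Tendsto (fun k => ∑ j, powSeminorm 𝒜 k (Pi.single j 1)) atTop (𝓝 0) := by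
      simpa using tendsto_finsetSum Finset.univ fun j _ =>
        Seminorm.tendsto_zero_of_limsup_apply_eq_zero hbdd
          (Seminorm.mem_ker.1 (htop ▸ Submodule.mem_top))
    obtain ⟨k, hk1, hk0⟩ :=
      ((hsum.eventually (gt_mem_nhds one_pos)).and (eventually_ne_atTop 0)).exists
    obtain ⟨P, hP, hP1⟩ := exists_one_le_mnorm hne hρ hk0
    have : mnorm P ≤ ∑ j, powSeminorm 𝒜 k (Pi.single j 1) :=
      mnorm_le_of_forall (Finset.sum_nonneg fun j _ => apply_nonneg _ _) fun x =>
        (norm_mulVec_le_powSeminorm hP x).trans (Seminorm.apply_le_sum_single_mul_norm _ x)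
    linarith

end barabanov

/-- **Classical Barabanov theorem.** A finite irreducible family `𝒜` of `d × d` real matrices
(no common nontrivial invariant subspace) with joint spectral radius `1` possesses a norm `N`
on `ℝ^d` such that `max_{A ∈ 𝒜} N (A x) = N x` for every `x`. -/
theorem barabanov_classical {d : ℕ} (𝒜 : Finset (Matrix (Fin d) (Fin d) ℝ))
    (hne : 𝒜.Nonempty)
    (hirr : ∀ S : Submodule ℝ (Fin d → ℝ),
      (∀ A ∈ 𝒜, ∀ x ∈ S, A.mulVec x ∈ S) → S = ⊥ ∨ S = ⊤)
    (hρ : Tendsto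
      (fun k : ℕ => sSup ((fun P => mnorm P ^ ((1 : ℝ) / k)) '' prodsOf (d := d) ↑𝒜 k))
      atTop (nhds 1)) :
    ∃ N : Seminorm ℝ (Fin d → ℝ), (∀ x, x ≠ 0 → 0 < N x) ∧
      ∀ x : Fin d → ℝ, IsGreatest ((fun A : Matrix (Fin d) (Fin d) ℝ => N (A.mulVec x)) '' (𝒜 : Set _)) (N x) := by
  have hρ' : Tendsto (jsrSeq 𝒜) atTop (𝓝 1) := by
    convert hρ using 2 with k
    rw [jsrSeq, prodsOf_eq_pow, Finset.coe_pow]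
  have hbdd := boundedSubmodule_powSeminorm_eq_top hirr hρ'
  set N := barabanovSeminorm 𝒜 hbdd
  have hker : N.ker = ⊥ := ker_barabanovSeminorm_eq_bot hbdd hne hirr hρ'
  refine ⟨N, fun x hx => (apply_nonneg N x).lt_of_ne' fun h => hx ?_, fun x => ?_⟩
  · rwa [← Submodule.mem_bot ℝ, ← hker]
  obtain ⟨A, hA, hAx⟩ := Finset.exists_mem_eq_sup' hne fun A => N (A *ᵥ x)
  exact ⟨⟨A, hA, (barabanovSeminorm_apply_eq_sup' hbdd hne x ▸ hAx).symm⟩,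
    Set.forall_mem_image.2 fun A hA => barabanovSeminorm_mulVec_le hbdd hne hA x⟩
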